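/- Let X ∈ GL(n;ℍ) be an invertible homogeneous quaternionic matrix of even degree with respect to a grading of degree ν ∈ Γⁿ (Γ = {0,ĩ,j̃,k̃} ⊂ (ℤ/2)³). Then for any NS-multiplier σ, the graded determinant Gdet_σ(X) = det(J_σ(X)) (determinant computed in the commutative twisted algebra ℍ_σ) lies in ℝ^×·1 ∪ ℝ^×·i ∪ ℝ^×·j ∪ ℝ^×·k, i.e. Gdet_σ(X) is a nonzero homogeneous quaternion; moreover Gdet_σ(X) is invertible in ℍ. -/

import Mathlib

open Quaternion

namespace GdetQuaternion

/-- The grading group (ℤ/2)³. -/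
abbrev G3 := Fin 3 → ZMod 2

/-- The standard pairing ⟨x,y⟩ on (ℤ/2)³. -/
def ip (x y : G3) : ZMod 2 := x 0 * y 0 + x 1 * y 1 + x 2 * y 2

/-- The commutation factor λ(x,y) = (−1)^⟨x,y⟩, valued in ℝ. -/
def lamQ (x y : G3) : ℝ := (-1) ^ (ip x y).val

/-- Degrees of i, j, k. -/
def dI : G3 := ![0, 1, 1]
def dJ : G3 := ![1, 0, 1]
def dK : G3 := ![1, 1, 0]

/-- The homogeneous component of degree γ of a quaternion, for the grading
ℍ⁰ = ℝ·1, ℍ^ĩ = ℝ·i, ℍ^j̃ = ℝ·j, ℍ^k̃ = ℝ·k (all other components zero). -/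
noncomputable def comp (γ : G3) (a : ℍ[ℝ]) : ℍ[ℝ] :=
  if γ = 0 then ⟨a.re, 0, 0, 0⟩
  else if γ = dI then ⟨0, a.imI, 0, 0⟩
  else if γ = dJ then ⟨0, 0, a.imJ, 0⟩
  else if γ = dK then ⟨0, 0, 0, a.imK⟩
  else 0

/-- The twisted (Nekludova–Scheunert) product a⋆b = σ(ã,b̃)·ab, extended
bilinearly from homogeneous components. -/
noncomputable def tmul (σ : G3 → G3 → ℝ) (a b : ℍ[ℝ]) : ℍ[ℝ] :=
  ∑ γ : G3, ∑ δ : G3, σ γ δ • (comp γ a * comp δ b)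

/-- The determinant of a quaternionic matrix computed in the commutative
twisted algebra (ℍ,⋆): det M = Σ_p sign(p) · M_{p(1),1} ⋆ ⋯ ⋆ M_{p(n),n}. -/
noncomputable def tdet {n : ℕ} (σ : G3 → G3 → ℝ) (M : Matrix (Fin n) (Fin n) ℍ[ℝ]) : ℍ[ℝ] :=
  ∑ p : Equiv.Perm (Fin n),
    (Equiv.Perm.sign p : ℤ) • (List.ofFn fun i => M (p i) i).foldr (tmul σ) 1

/-!
With `σ` an NS-multiplier, `⋆` makes `ℍ` a commutative ring `ℍ_σ`, graded by `(ℤ/2)³`, and `tdet`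
is the ordinary determinant over it. The entries of `J_σ X` have degree `x + ν j - ν i`, so each
term of the Leibniz expansion, hence `Gdet_σ X`, is homogeneous of degree `n • x`; a nonzero
homogeneous quaternion is a real multiple of `1`, `i`, `j` or `k`.

For `Gdet_σ X ≠ 0`: since `-x = x`, the degree-`x` part `Z` of `X⁻¹` still satisfies `X Z = 1`.
For homogeneous `X`, `Y` of degrees `x`, `y` one has `J_σ X ⋆ J_σ Y = σ(x,y) • J_σ (X Y)`, so
`J_σ X ⋆ J_σ Z = σ(x,x) • 1` and `det (J_σ X)` is a unit of `ℍ_σ`. Being nonzero, it is then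
invertible in the division ring `ℍ`.
-/

theorem _root_.Matrix.det_mem_graded {ι R S m : Type*} [AddCommGroup ι] [CommRing R] [SetLike S R]
    [AddSubgroupClass S R] (A : ι → S) [SetLike.GradedMonoid A] [Fintype m] [DecidableEq m]
    {M : Matrix m m R} {x : ι} {ν : m → ι} (hM : ∀ i j, M i j ∈ A (x + ν j - ν i)) :
    M.det ∈ A (Fintype.card m • x) := by
  rw [Matrix.det_apply]
  refine sum_mem fun p _ => ?_
  rw [Units.smul_def]
  refine zsmul_mem ?_ _
  have hdeg : ∑ i, (x + ν i - ν (p i)) = Fintype.card m • x := by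
    rw [Finset.sum_sub_distrib, Equiv.sum_comp p ν, Finset.sum_add_distrib, Finset.sum_const,
      Finset.card_univ, add_sub_cancel_right]
  exact hdeg ▸ SetLike.prod_mem_graded A _ _ fun i _ => hM (p i) i

/-- The paper's `Γ`: the degrees in which `ℍ` has a nonzero component. -/
def evenDegrees : Finset G3 := {0, dI, dJ, dK}

lemma mem_evenDegrees {γ : G3} : γ ∈ evenDegrees ↔ γ = 0 ∨ γ = dI ∨ γ = dJ ∨ γ = dK := by
  simp [evenDegrees]

lemma G3.add_self (γ : G3) : γ + γ = 0 :=
  funext fun i => CharTwo.add_self_eq_zero (γ i)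

lemma G3.sub_eq_add (γ δ : G3) : γ - δ = γ + δ := by
  rw [sub_eq_add_neg, neg_eq_of_add_eq_zero_right (G3.add_self δ)]

section Grading

lemma comp_of_notMem {γ : G3} (hγ : γ ∉ evenDegrees) (a : ℍ[ℝ]) : comp γ a = 0 := by
  simp only [mem_evenDegrees, not_or] at hγ
  obtain ⟨h0, hI, hJ, hK⟩ := hγ
  exact (if_neg h0).trans <| (if_neg hI).trans <| (if_neg hJ).trans (if_neg hK)

lemma comp_eq_mk (γ : G3) (a : ℍ[ℝ]) : comp γ a = ⟨if γ = 0 then a.re else 0,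
    if γ = dI then a.imI else 0, if γ = dJ then a.imJ else 0, if γ = dK then a.imK else 0⟩ := by
  by_cases hγ : γ ∈ evenDegrees
  · rcases mem_evenDegrees.1 hγ with rfl | rfl | rfl | rfl <;> rfl
  · rw [comp_of_notMem hγ]
    simp only [mem_evenDegrees, not_or] at hγ
    simp only [hγ, if_false]
    rfl

@[simp] lemma re_comp (γ : G3) (a : ℍ[ℝ]) : (comp γ a).re = if γ = 0 then a.re else 0 := by
  rw [comp_eq_mk]

@[simp] lemma imI_comp (γ : G3) (a : ℍ[ℝ]) : (comp γ a).imI = if γ = dI then a.imI else 0 := by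
  rw [comp_eq_mk]

@[simp] lemma imJ_comp (γ : G3) (a : ℍ[ℝ]) : (comp γ a).imJ = if γ = dJ then a.imJ else 0 := by
  rw [comp_eq_mk]

@[simp] lemma imK_comp (γ : G3) (a : ℍ[ℝ]) : (comp γ a).imK = if γ = dK then a.imK else 0 := by
  rw [comp_eq_mk]

noncomputable def compLinear (γ : G3) : ℍ[ℝ] →ₗ[ℝ] ℍ[ℝ] where
  toFun := comp γ
  map_add' a b := by ext <;> simp <;> split_ifs <;> simp
  map_smul' r a := by ext <;> simp

lemma comp_add (γ : G3) (a b : ℍ[ℝ]) : comp γ (a + b) = comp γ a + comp γ b :=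
  map_add (compLinear γ) a b

lemma comp_smul (γ : G3) (r : ℝ) (a : ℍ[ℝ]) : comp γ (r • a) = r • comp γ a :=
  map_smul (compLinear γ) r a

@[simp] lemma comp_zero (γ : G3) : comp γ 0 = 0 :=
  map_zero (compLinear γ)

lemma comp_sum {ι : Type*} (γ : G3) (s : Finset ι) (f : ι → ℍ[ℝ]) :
    comp γ (∑ i ∈ s, f i) = ∑ i ∈ s, comp γ (f i) :=
  map_sum (compLinear γ) f s

lemma comp_zero_one : comp 0 (1 : ℍ[ℝ]) = 1 := by
  ext <;> simp

lemma comp_comp_self (γ : G3) (a : ℍ[ℝ]) : comp γ (comp γ a) = comp γ a := by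
  ext <;> simp +contextual

lemma comp_comp_of_ne {γ δ : G3} (h : δ ≠ γ) (a : ℍ[ℝ]) : comp δ (comp γ a) = 0 := by
  ext <;> simp <;> rintro rfl rfl <;> exact absurd rfl h

lemma comp_eq_zero_of_ne {γ δ : G3} {a : ℍ[ℝ]} (ha : comp γ a = a) (h : δ ≠ γ) : comp δ a = 0 := by
  rw [← ha, comp_comp_of_ne h]

lemma sum_comp (a : ℍ[ℝ]) : ∑ γ, comp γ a = a := by
  rw [← Finset.sum_subset (Finset.subset_univ evenDegrees) fun γ _ hγ => comp_of_notMem hγ a,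
    evenDegrees, Finset.sum_insert (by decide), Finset.sum_insert (by decide),
    Finset.sum_pair (by decide)]
  ext <;> simp +decide

lemma comp_mul_comp (γ δ : G3) (a b : ℍ[ℝ]) :
    comp (γ + δ) (comp γ a * comp δ b) = comp γ a * comp δ b := by
  by_cases hγ : γ ∈ evenDegrees; swap; · simp [comp_of_notMem hγ]
  by_cases hδ : δ ∈ evenDegrees; swap; · simp [comp_of_notMem hδ]
  rcases mem_evenDegrees.1 hγ with rfl | rfl | rfl | rfl <;>
  rcases mem_evenDegrees.1 hδ with rfl | rfl | rfl | rfl <;>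
  ext <;> simp +decide

lemma comp_mul_comm (γ δ : G3) (a b : ℍ[ℝ]) :
    comp γ a * comp δ b = lamQ γ δ • (comp δ b * comp γ a) := by
  by_cases hγ : γ ∈ evenDegrees; swap; · simp [comp_of_notMem hγ]
  by_cases hδ : δ ∈ evenDegrees; swap; · simp [comp_of_notMem hδ]
  rcases mem_evenDegrees.1 hγ with rfl | rfl | rfl | rfl <;>
  rcases mem_evenDegrees.1 hδ with rfl | rfl | rfl | rfl <;>
  ext <;> simp +decide [lamQ, ip] <;> ring

lemma mul_comp_of_comp_eq {α : G3} {a : ℍ[ℝ]} (ha : comp α a = a) (γ : G3) (w : ℍ[ℝ]) :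
    a * comp γ w = comp (α + γ) (a * w) := by
  have hhom : ∀ δ, comp (α + δ) (a * comp δ w) = a * comp δ w := fun δ => by
    simpa only [ha, comp_comp_self] using comp_mul_comp α δ a (comp δ w)
  rw [← congrArg (a * ·) (sum_comp w), Finset.mul_sum, comp_sum, Finset.sum_eq_single γ]
  · exact (hhom γ).symm
  · intro δ _ hδ
    exact comp_eq_zero_of_ne (hhom δ) (fun h => hδ (add_left_cancel h).symm)
  · simp

lemma exists_smul_basis_of_comp_eq {γ : G3} {a : ℍ[ℝ]} (ha : comp γ a = a) (h0 : a ≠ 0) :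
    ∃ r : ℝ, r ≠ 0 ∧ (a = r • (1 : ℍ[ℝ]) ∨ a = r • (⟨0, 1, 0, 0⟩ : ℍ[ℝ]) ∨
      a = r • (⟨0, 0, 1, 0⟩ : ℍ[ℝ]) ∨ a = r • (⟨0, 0, 0, 1⟩ : ℍ[ℝ])) := by
  by_cases hγ : γ ∈ evenDegrees; swap; · exact absurd (ha.symm.trans (comp_of_notMem hγ a)) h0
  rcases mem_evenDegrees.1 hγ with rfl | rfl | rfl | rfl
  · have hform : a = a.re • (1 : ℍ[ℝ]) := by rw [← ha]; ext <;> simp +decide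
    exact ⟨a.re, fun hr => h0 (by rw [← ha]; ext <;> simp +decide [hr]), .inl hform⟩
  · have hform : a = a.imI • (⟨0, 1, 0, 0⟩ : ℍ[ℝ]) := by rw [← ha]; ext <;> simp +decide
    exact ⟨a.imI, fun hr => h0 (by rw [← ha]; ext <;> simp +decide [hr]), .inr (.inl hform)⟩
  · have hform : a = a.imJ • (⟨0, 0, 1, 0⟩ : ℍ[ℝ]) := by rw [← ha]; ext <;> simp +decide
    exact ⟨a.imJ, fun hr => h0 (by rw [← ha]; ext <;> simp +decide [hr]), .inr (.inr (.inl hform))⟩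
  · have hform : a = a.imK • (⟨0, 0, 0, 1⟩ : ℍ[ℝ]) := by rw [← ha]; ext <;> simp +decide
    exact ⟨a.imK, fun hr => h0 (by rw [← ha]; ext <;> simp +decide [hr]), .inr (.inr (.inr hform))⟩

end Grading
section TwistedProduct

variable {σ : G3 → G3 → ℝ}

lemma tmul_add_left (a a' b : ℍ[ℝ]) : tmul σ (a + a') b = tmul σ a b + tmul σ a' b := by
  simp only [tmul, comp_add, add_mul, smul_add, Finset.sum_add_distrib]

lemma tmul_add_right (a b b' : ℍ[ℝ]) : tmul σ a (b + b') = tmul σ a b + tmul σ a b' := by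
  simp only [tmul, comp_add, mul_add, smul_add, Finset.sum_add_distrib]

lemma tmul_smul_left (r : ℝ) (a b : ℍ[ℝ]) : tmul σ (r • a) b = r • tmul σ a b := by
  simp only [tmul, comp_smul, smul_mul_assoc, Finset.smul_sum, smul_comm r]

lemma tmul_smul_right (r : ℝ) (a b : ℍ[ℝ]) : tmul σ a (r • b) = r • tmul σ a b := by
  simp only [tmul, comp_smul, mul_smul_comm, Finset.smul_sum, smul_comm r]

@[simp] lemma zero_tmul (b : ℍ[ℝ]) : tmul σ 0 b = 0 := by
  simp [tmul]

@[simp] lemma tmul_zero (a : ℍ[ℝ]) : tmul σ a 0 = 0 := by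
  simp [tmul]

lemma tmul_sum_left {ι : Type*} (s : Finset ι) (f : ι → ℍ[ℝ]) (c : ℍ[ℝ]) :
    tmul σ (∑ i ∈ s, f i) c = ∑ i ∈ s, tmul σ (f i) c :=
  map_sum (AddMonoidHom.mk' (tmul σ · c) fun a a' => tmul_add_left a a' c) f s

lemma tmul_sum_right {ι : Type*} (s : Finset ι) (f : ι → ℍ[ℝ]) (c : ℍ[ℝ]) :
    tmul σ c (∑ i ∈ s, f i) = ∑ i ∈ s, tmul σ c (f i) :=
  map_sum (AddMonoidHom.mk' (tmul σ c) (tmul_add_right c)) f s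

lemma tmul_of_comp_left {α : G3} {a : ℍ[ℝ]} (ha : comp α a = a) (b : ℍ[ℝ]) :
    tmul σ a b = ∑ δ, σ α δ • (a * comp δ b) := by
  rw [tmul, Finset.sum_eq_single α (fun γ _ hγ => by simp [comp_eq_zero_of_ne ha hγ]) (by simp), ha]

lemma tmul_of_comp_right {β : G3} {b : ℍ[ℝ]} (hb : comp β b = b) (a : ℍ[ℝ]) :
    tmul σ a b = ∑ γ, σ γ β • (comp γ a * b) := by
  refine Finset.sum_congr rfl fun γ _ => ?_
  rw [Finset.sum_eq_single β (fun δ _ hδ => by simp [comp_eq_zero_of_ne hb hδ]) (by simp), hb]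

lemma tmul_of_comp {α β : G3} {a b : ℍ[ℝ]} (ha : comp α a = a) (hb : comp β b = b) :
    tmul σ a b = σ α β • (a * b) := by
  rw [tmul_of_comp_left ha,
    Finset.sum_eq_single β (fun δ _ hδ => by simp [comp_eq_zero_of_ne hb hδ]) (by simp), hb]

lemma comp_tmul {α β : G3} {a b : ℍ[ℝ]} (ha : comp α a = a) (hb : comp β b = b) :
    comp (α + β) (tmul σ a b) = tmul σ a b := by
  rw [tmul_of_comp ha hb, comp_smul, ← ha, ← hb, comp_mul_comp]

end TwistedProduct
structure NSMultiplier where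
  toFun : G3 → G3 → ℝ
  ne_zero : ∀ x y, toFun x y ≠ 0
  map_add_left : ∀ x y z, toFun (x + y) z = toFun x z * toFun y z
  map_add_right : ∀ x y z, toFun x (y + z) = toFun x y * toFun x z
  lamQ_mul : ∀ x y, lamQ x y * toFun x y = (-1) ^ ((ip x x).val * (ip y y).val) * toFun y x

namespace NSMultiplier

instance : CoeFun NSMultiplier fun _ => G3 → G3 → ℝ := ⟨toFun⟩

variable (σ : NSMultiplier)

@[simp] lemma map_zero_left (y : G3) : σ 0 y = 1 := by
  have h := σ.map_add_left 0 0 y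
  rw [add_zero] at h
  exact (mul_eq_left₀ (σ.ne_zero 0 y)).1 h.symm

@[simp] lemma map_zero_right (x : G3) : σ x 0 = 1 := by
  have h := σ.map_add_right x 0 0
  rw [add_zero] at h
  exact (mul_eq_left₀ (σ.ne_zero x 0)).1 h.symm

lemma mul_self (x y : G3) : σ x y * σ x y = 1 := by
  rw [← σ.map_add_left, G3.add_self, map_zero_left]

lemma inv_eq (x y : G3) : (σ x y)⁻¹ = σ x y :=
  inv_eq_of_mul_eq_one_right (σ.mul_self x y)

lemma map_comm {x y : G3} (hx : x ∈ evenDegrees) (hy : y ∈ evenDegrees) :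
    σ y x = lamQ x y * σ x y := by
  have hip : ∀ γ ∈ evenDegrees, ip γ γ = 0 := by decide
  simpa [hip x hx, hip y hy] using (σ.lamQ_mul x y).symm

end NSMultiplier

section TwistedRing

variable (σ : NSMultiplier)

lemma tmul_assoc (a b c : ℍ[ℝ]) : tmul σ (tmul σ a b) c = tmul σ a (tmul σ b c) := by
  have lhs : tmul σ (tmul σ a b) c = ∑ γ, ∑ δ, ∑ ε,
      (σ γ δ * (σ γ ε * σ δ ε)) • (comp γ a * (comp δ b * comp ε c)) := by
    have hab : tmul σ a b = ∑ γ, ∑ δ, σ γ δ • (comp γ a * comp δ b) := rfl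
    simp only [hab, tmul_sum_left, tmul_smul_left]
    refine Finset.sum_congr rfl fun γ _ => Finset.sum_congr rfl fun δ _ => ?_
    rw [tmul_of_comp_left (comp_mul_comp γ δ a b), Finset.smul_sum]
    simp only [smul_smul, σ.map_add_left, mul_assoc]
  have rhs : tmul σ a (tmul σ b c) = ∑ δ, ∑ ε, ∑ γ,
      (σ δ ε * (σ γ δ * σ γ ε)) • (comp γ a * (comp δ b * comp ε c)) := by
    have hbc : tmul σ b c = ∑ δ, ∑ ε, σ δ ε • (comp δ b * comp ε c) := rfl
    simp only [hbc, tmul_sum_right, tmul_smul_right]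
    refine Finset.sum_congr rfl fun δ _ => Finset.sum_congr rfl fun ε _ => ?_
    rw [tmul_of_comp_right (comp_mul_comp δ ε b c), Finset.smul_sum]
    simp only [smul_smul, σ.map_add_right]
  rw [lhs, rhs, Finset.sum_comm]
  refine Finset.sum_congr rfl fun δ _ => ?_
  rw [Finset.sum_comm]
  exact Finset.sum_congr rfl fun ε _ => Finset.sum_congr rfl fun γ _ => by ring_nf

lemma tmul_comm (a b : ℍ[ℝ]) : tmul σ a b = tmul σ b a := by
  rw [tmul, Finset.sum_comm]
  refine Finset.sum_congr rfl fun δ _ => Finset.sum_congr rfl fun γ _ => ?_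
  by_cases hγ : γ ∈ evenDegrees; swap; · simp [comp_of_notMem hγ]
  by_cases hδ : δ ∈ evenDegrees; swap; · simp [comp_of_notMem hδ]
  rw [comp_mul_comm γ δ a b, smul_smul, mul_comm, ← σ.map_comm hγ hδ]

lemma one_tmul (a : ℍ[ℝ]) : tmul σ 1 a = a := by
  simp only [tmul_of_comp_left comp_zero_one, σ.map_zero_left, one_smul, one_mul, sum_comp]

lemma tmul_one (a : ℍ[ℝ]) : tmul σ a 1 = a := by
  simp only [tmul_of_comp_right comp_zero_one, σ.map_zero_right, one_smul, mul_one, sum_comp]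

/-- The paper's `ℍ_σ`. -/
def TwistedQuaternion (_σ : NSMultiplier) : Type := ℍ[ℝ]

noncomputable instance : AddCommGroup (TwistedQuaternion σ) :=
  inferInstanceAs (AddCommGroup ℍ[ℝ])

noncomputable instance : CommRing (TwistedQuaternion σ) where
  mul := tmul σ
  one := (1 : ℍ[ℝ])
  left_distrib := tmul_add_right
  right_distrib := tmul_add_left
  zero_mul := zero_tmul
  mul_zero := tmul_zero
  mul_assoc := tmul_assoc σ
  one_mul := one_tmul σ
  mul_one := tmul_one σ
  mul_comm := tmul_comm σ

instance : Nontrivial (TwistedQuaternion σ) :=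
  inferInstanceAs (Nontrivial ℍ[ℝ])

noncomputable def toTwisted : ℍ[ℝ] ≃+ TwistedQuaternion σ := AddEquiv.refl _

end TwistedRing

section Homogeneous

variable (σ : NSMultiplier)

lemma toTwisted_mul (a b : ℍ[ℝ]) : toTwisted σ a * toTwisted σ b = toTwisted σ (tmul σ a b) := rfl

def homogeneous (γ : G3) : AddSubgroup (TwistedQuaternion σ) where
  carrier := {a | comp γ ((toTwisted σ).symm a) = (toTwisted σ).symm a}
  zero_mem' := comp_zero γ
  add_mem' ha hb := (comp_add γ _ _).trans (congrArg₂ (· + ·) ha hb)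
  neg_mem' {a} ha := (map_neg (compLinear γ) a).trans (congrArg Neg.neg ha)

lemma toTwisted_mem_homogeneous {γ : G3} {a : ℍ[ℝ]} :
    toTwisted σ a ∈ homogeneous σ γ ↔ comp γ a = a := Iff.rfl

instance : SetLike.GradedMonoid (homogeneous σ) where
  one_mem := comp_zero_one
  mul_mem _ _ _ _ ha hb := comp_tmul ha hb

lemma isUnit_toTwisted_smul_one {c : ℝ} (hc : c ≠ 0) : IsUnit (toTwisted σ (c • 1)) :=
  IsUnit.of_mul_eq_one (toTwisted σ (c⁻¹ • 1)) <| by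
    rw [toTwisted_mul, tmul_smul_left, tmul_smul_right, smul_smul, mul_inv_cancel₀ hc, one_smul,
      one_tmul]
    rfl

lemma toTwisted_tdet {n : ℕ} (M : Matrix (Fin n) (Fin n) ℍ[ℝ]) :
    toTwisted σ (tdet σ M) = (M.map (toTwisted σ)).det := by
  rw [Matrix.det_apply, tdet, map_sum]
  refine Finset.sum_congr rfl fun p _ => ?_
  rw [Units.smul_def, map_zsmul, ← List.prod_ofFn, List.prod_eq_foldr]
  rfl

end Homogeneous

section TwistMatrix

variable {m : Type*} {ν : m → G3}

/-- The paper's `J_σ`. -/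
noncomputable def twistMatrix (σ : G3 → G3 → ℝ) (ν : m → G3) (x : G3) (X : Matrix m m ℍ[ℝ]) :
    Matrix m m ℍ[ℝ] :=
  fun i j => (σ x (ν j) * (σ (ν i) (x + ν j - ν i))⁻¹) • X i j

lemma comp_twistMatrix (σ : G3 → G3 → ℝ) {x : G3} {X : Matrix m m ℍ[ℝ]}
    (hX : ∀ i j, comp (x + ν j - ν i) (X i j) = X i j) (i j : m) :
    comp (x + ν j - ν i) (twistMatrix σ ν x X i j) = twistMatrix σ ν x X i j := by
  rw [twistMatrix, comp_smul, hX]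

lemma twistMatrix_one [DecidableEq m] (σ : NSMultiplier) : twistMatrix σ ν 0 1 = 1 := by
  ext1 i j
  by_cases h : i = j
  · subst h; simp [twistMatrix]
  · simp [twistMatrix, Matrix.one_apply_ne h]

lemma NSMultiplier.twist_coeff_mul (σ : NSMultiplier) (x y a b c : G3) :
    σ (x + b - a) (y + c - b) * ((σ x b * (σ a (x + b - a))⁻¹) * (σ y c * (σ b (y + c - b))⁻¹))
      = σ x y * (σ (x + y) c * (σ a (x + y + c - a))⁻¹) := by
  have hsq : ∀ u v, σ u v ^ 2 = 1 := fun u v => (sq _).trans (σ.mul_self u v)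
  simp only [G3.sub_eq_add, σ.inv_eq, mul_inv, σ.map_add_left, σ.map_add_right]
  ring_nf
  simp [hsq]

lemma twistMatrix_mul [Fintype m] (σ : NSMultiplier) {x y : G3} {X Y : Matrix m m ℍ[ℝ]}
    (hX : ∀ i j, comp (x + ν j - ν i) (X i j) = X i j)
    (hY : ∀ i j, comp (y + ν j - ν i) (Y i j) = Y i j) :
    (twistMatrix σ ν x X).map (toTwisted σ) * (twistMatrix σ ν y Y).map (toTwisted σ)
      = (σ x y • twistMatrix σ ν (x + y) (X * Y)).map (toTwisted σ) := by
  ext i k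
  simp only [Matrix.mul_apply, Matrix.map_apply, toTwisted_mul, ← map_sum]
  congr 1
  simp only [twistMatrix, Matrix.smul_apply, Matrix.mul_apply, tmul_smul_left, tmul_smul_right,
    tmul_of_comp (hX _ _) (hY _ _), smul_smul, Finset.smul_sum]
  refine Finset.sum_congr rfl fun j _ => ?_
  rw [← σ.twist_coeff_mul x y (ν i) (ν j) (ν k)]
  ring_nf

variable [Fintype m] [DecidableEq m]

lemma exists_homogeneous_mul_eq_one {x : G3} {X : Matrix m m ℍ[ℝ]}
    (hX : ∀ i j, comp (x + ν j - ν i) (X i j) = X i j) (hXinv : IsUnit X) :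
    ∃ Z : Matrix m m ℍ[ℝ], (∀ i j, comp (x + ν j - ν i) (Z i j) = Z i j) ∧ X * Z = 1 := by
  obtain ⟨u, rfl⟩ := hXinv
  refine ⟨Matrix.of fun i j => comp (x + ν j - ν i) (u.inv i j),
    fun i j => comp_comp_self _ _, Matrix.ext fun i k => ?_⟩
  have hdeg : ∀ j, (x + ν j - ν i) + (x + ν k - ν j) = ν k - ν i := fun j => by
    rw [← zero_add (ν k - ν i), ← G3.add_self x]; abel
  simp only [Matrix.mul_apply, Matrix.of_apply, mul_comp_of_comp_eq (hX _ _), hdeg]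
  rw [← comp_sum, ← Matrix.mul_apply, u.val_inv]
  by_cases h : i = k
  · subst h; simp [comp_zero_one]
  · simp [Matrix.one_apply_ne h]

lemma isUnit_det_twistMatrix (σ : NSMultiplier) {x : G3} {X : Matrix m m ℍ[ℝ]}
    (hX : ∀ i j, comp (x + ν j - ν i) (X i j) = X i j) (hXinv : IsUnit X) :
    IsUnit ((twistMatrix σ ν x X).map (toTwisted σ)).det := by
  obtain ⟨Z, hZ, hXZ⟩ := exists_homogeneous_mul_eq_one hX hXinv
  have hdiag : (σ x x • (1 : Matrix m m ℍ[ℝ])).map (toTwisted σ)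
      = Matrix.diagonal fun _ => toTwisted σ (σ x x • 1) := by
    ext i j
    simp only [Matrix.map_apply, Matrix.smul_apply, Matrix.one_apply, Matrix.diagonal_apply]
    split_ifs <;> simp
  refine isUnit_of_mul_isUnit_left (y := ((twistMatrix σ ν x Z).map (toTwisted σ)).det) ?_
  rw [← Matrix.det_mul, twistMatrix_mul σ hX hZ, hXZ, G3.add_self, twistMatrix_one, hdiag,
    Matrix.det_diagonal, Finset.prod_const]
  exact (isUnit_toTwisted_smul_one σ (σ.ne_zero x x)).pow _

end TwistMatrix

noncomputable def gdet (σ : G3 → G3 → ℝ) {n : ℕ} (ν : Fin n → G3) (x : G3)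
    (X : Matrix (Fin n) (Fin n) ℍ[ℝ]) : ℍ[ℝ] :=
  tdet σ (twistMatrix σ ν x X)

section Gdet

variable (σ : NSMultiplier) {n : ℕ} {ν : Fin n → G3} {x : G3} {X : Matrix (Fin n) (Fin n) ℍ[ℝ]}

lemma comp_gdet (hX : ∀ i j, comp (x + ν j - ν i) (X i j) = X i j) :
    comp (n • x) (gdet σ ν x X) = gdet σ ν x X := by
  have h := Matrix.det_mem_graded (homogeneous σ) (M := (twistMatrix σ ν x X).map (toTwisted σ))
    (comp_twistMatrix σ hX)
  rwa [Fintype.card_fin, ← toTwisted_tdet, toTwisted_mem_homogeneous] at h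

lemma gdet_ne_zero (hX : ∀ i j, comp (x + ν j - ν i) (X i j) = X i j) (hXinv : IsUnit X) :
    gdet σ ν x X ≠ 0 := by
  have h := (isUnit_det_twistMatrix σ hX hXinv).ne_zero
  rwa [← toTwisted_tdet, Ne, AddEquiv.map_eq_zero_iff] at h

end Gdet

theorem gdet_homogeneous_invertible_general
    (σ : G3 → G3 → ℝ)
    (hσne : ∀ x y, σ x y ≠ 0)
    (hσadd₁ : ∀ x y z, σ (x + y) z = σ x z * σ y z)
    (hσadd₂ : ∀ x y z, σ x (y + z) = σ x y * σ x z)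
    (hNS : ∀ x y, lamQ x y * σ x y =
      (-1 : ℝ) ^ ((ip x x).val * (ip y y).val) * σ y x)
    {n : ℕ} (ν : Fin n → G3) (x : G3)
    (X : Matrix (Fin n) (Fin n) ℍ[ℝ])
    (hX : ∀ i j, comp (x + ν j - ν i) (X i j) = X i j)
    (hXinv : IsUnit X) :
    (∃ r : ℝ, r ≠ 0 ∧
      (tdet σ (fun i j => (σ x (ν j) * (σ (ν i) (x + ν j - ν i))⁻¹) • X i j)
          = r • (1 : ℍ[ℝ]) ∨
       tdet σ (fun i j => (σ x (ν j) * (σ (ν i) (x + ν j - ν i))⁻¹) • X i j)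
          = r • (⟨0, 1, 0, 0⟩ : ℍ[ℝ]) ∨
       tdet σ (fun i j => (σ x (ν j) * (σ (ν i) (x + ν j - ν i))⁻¹) • X i j)
          = r • (⟨0, 0, 1, 0⟩ : ℍ[ℝ]) ∨
       tdet σ (fun i j => (σ x (ν j) * (σ (ν i) (x + ν j - ν i))⁻¹) • X i j)
          = r • (⟨0, 0, 0, 1⟩ : ℍ[ℝ]))) ∧
    IsUnit (tdet σ (fun i j => (σ x (ν j) * (σ (ν i) (x + ν j - ν i))⁻¹) • X i j)) := by
  let σ' : NSMultiplier := ⟨σ, hσne, hσadd₁, hσadd₂, hNS⟩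
  have hne : gdet σ' ν x X ≠ 0 := gdet_ne_zero σ' hX hXinv
  exact ⟨exists_smul_basis_of_comp_eq (comp_gdet σ' hX) hne, isUnit_iff_ne_zero.2 hne⟩

/-- Let X be an invertible homogeneous quaternionic matrix of even degree x
with respect to a grading of degree ν (all degrees in the even subgroup
Γ = {0,ĩ,j̃,k̃} ⊂ (ℤ/2)³), and let σ be an NS-multiplier. Then the graded
determinant Gdet_σ(X) = det(J_σ(X)) is a nonzero homogeneous quaternion,
lying in ℝ^×·1 ∪ ℝ^×·i ∪ ℝ^×·j ∪ ℝ^×·k, and is invertible in ℍ. -/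
theorem gdet_homogeneous_invertible
    (σ : G3 → G3 → ℝ)
    (hσne : ∀ x y, σ x y ≠ 0)
    (hσadd₁ : ∀ x y z, σ (x + y) z = σ x z * σ y z)
    (hσadd₂ : ∀ x y z, σ x (y + z) = σ x y * σ x z)
    (hNS : ∀ x y, lamQ x y * σ x y =
      (-1 : ℝ) ^ ((ip x x).val * (ip y y).val) * σ y x)
    {n : ℕ} (ν : Fin n → G3) (x : G3)
    (hx : ip x x = 0) (hν : ∀ i, ip (ν i) (ν i) = 0)
    (X : Matrix (Fin n) (Fin n) ℍ[ℝ])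
    (hX : ∀ i j, comp (x + ν j - ν i) (X i j) = X i j)
    (hXinv : IsUnit X) :
    (∃ r : ℝ, r ≠ 0 ∧
      (tdet σ (fun i j => (σ x (ν j) * (σ (ν i) (x + ν j - ν i))⁻¹) • X i j)
          = r • (1 : ℍ[ℝ]) ∨
       tdet σ (fun i j => (σ x (ν j) * (σ (ν i) (x + ν j - ν i))⁻¹) • X i j)
          = r • (⟨0, 1, 0, 0⟩ : ℍ[ℝ]) ∨
       tdet σ (fun i j => (σ x (ν j) * (σ (ν i) (x + ν j - ν i))⁻¹) • X i j)
          = r • (⟨0, 0, 1, 0⟩ : ℍ[ℝ]) ∨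
       tdet σ (fun i j => (σ x (ν j) * (σ (ν i) (x + ν j - ν i))⁻¹) • X i j)
          = r • (⟨0, 0, 0, 1⟩ : ℍ[ℝ]))) ∧
    IsUnit (tdet σ (fun i j => (σ x (ν j) * (σ (ν i) (x + ν j - ν i))⁻¹) • X i j)) :=
  gdet_homogeneous_invertible_general σ hσne hσadd₁ hσadd₂ hNS ν x X hX hXinv

end GdetQuaternion
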